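/- Let f(x,y) = sqrt((x+y−2)/(x+y)) − sqrt((x+y−2)/(x·y)). For every integer y ≥ 3, one has f(1,2) + f(2,4) + f(4,y) > 0. -/
import Mathlib


noncomputable def f (x y : ℝ) : ℝ :=
  Real.sqrt ((x + y - 2) / (x + y)) - Real.sqrt ((x + y - 2) / (x * y))

theorem f12_f24_f4y_pos (y : ℤ) (hy : 3 ≤ y) :
    f 1 2 + f 2 4 + f 4 y > 0 := by
  have hy' : (3:ℝ) ≤ (y:ℝ) := by exact_mod_cast hy
  unfold f
  rw [show ((1:ℝ)+2-2)/(1+2) = 1/3 by norm_num, show ((1:ℝ)+2-2)/(1*2) = 1/2 by norm_num,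
    show ((2:ℝ)+4-2)/(2+4) = 2/3 by norm_num, show ((2:ℝ)+4-2)/(2*4) = 1/2 by norm_num]
  have hA : Real.sqrt (5/7) ≤ Real.sqrt ((4 + (y:ℝ) - 2) / (4 + y)) := by
    apply Real.sqrt_le_sqrt
    rw [div_le_div_iff₀ (by norm_num) (by linarith)]
    nlinarith
  have hB : Real.sqrt ((4 + (y:ℝ) - 2) / (4 * y)) ≤ Real.sqrt (5/12) := by
    apply Real.sqrt_le_sqrt
    rw [div_le_div_iff₀ (by linarith) (by norm_num)]
    nlinarith
  have h1 : (0.577:ℝ) < Real.sqrt (1/3) := by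
    exact (Real.lt_sqrt (by norm_num)).2 (by norm_num)
  have h2 : (0.816:ℝ) < Real.sqrt (2/3) := by
    exact (Real.lt_sqrt (by norm_num)).2 (by norm_num)
  have h3 : (0.845:ℝ) < Real.sqrt (5/7) := by
    exact (Real.lt_sqrt (by norm_num)).2 (by norm_num)
  have h4 : Real.sqrt (1/2) < 0.7072 := by
    exact (Real.sqrt_lt' (by norm_num)).2 (by norm_num)
  have h5 : Real.sqrt (5/12) < 0.646 := by
    exact (Real.sqrt_lt' (by norm_num)).2 (by norm_num)
  linarith
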